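/- Let F be a field and n ≥ 3. There is a constant C_n, depending only on n, with the following property: if 𝔏 is a finite collection of lines in F^n and K is a nonempty subset of the set of joints of 𝔏, then there exists a line l ∈ 𝔏 such that |l ∩ K| ≤ C_n · |K|^{1/n}. -/

import Mathlib

/-- A line in `F^n`: a set of the form `{v + t • b : t ∈ F}` with `b ≠ 0`. -/
def IsLine (F : Type*) [Field F] {n : ℕ} (l : Set (Fin n → F)) : Prop :=
  ∃ v b : Fin n → F, b ≠ 0 ∧ l = {x | ∃ t : F, x = v + t • b}

/-- `b` is a direction of the line `l`. -/
def IsDirection (F : Type*) [Field F] {n : ℕ} (b : Fin n → F) (l : Set (Fin n → F)) : Prop :=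
  b ≠ 0 ∧ ∃ v : Fin n → F, l = {x | ∃ t : F, x = v + t • b}

/-- The lines `l 0, …, l (n-1)` form a joint at `x`: each passes through `x` and
their directions span `F^n`. -/
def FormsJoint (F : Type*) [Field F] {n : ℕ} (l : Fin n → Set (Fin n → F))
    (x : Fin n → F) : Prop :=
  (∀ i, x ∈ l i) ∧ ∃ b : Fin n → Fin n → F,
    (∀ i, IsDirection F (b i) (l i)) ∧ Submodule.span F (Set.range b) = ⊤

/-- `x` is a joint of the collection `𝔏`: there are (at least) `n` distinct lines of `𝔏`
through `x` whose directions span `F^n`. -/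
def IsJoint (F : Type*) [Field F] {n : ℕ} (𝔏 : Set (Set (Fin n → F)))
    (x : Fin n → F) : Prop :=
  ∃ l : Fin n → Set (Fin n → F), Function.Injective l ∧ (∀ i, l i ∈ 𝔏) ∧ FormsJoint F l x

/-- The multiplicity `N(x)`: the number of `n`-tuples of lines of `𝔏` forming a joint at `x`. -/
noncomputable def jointMult (F : Type*) [Field F] {n : ℕ} (𝔏 : Set (Set (Fin n → F)))
    (x : Fin n → F) : ℕ :=
  Set.ncard {l : Fin n → Set (Fin n → F) | (∀ i, l i ∈ 𝔏) ∧ FormsJoint F l x}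

/-- `𝔏` is generic: whenever `n` distinct lines of `𝔏` pass through a common point,
they form a joint there. -/
def Generic (F : Type*) [Field F] {n : ℕ} (𝔏 : Set (Set (Fin n → F))) : Prop :=
  ∀ (l : Fin n → Set (Fin n → F)) (x : Fin n → F), Function.Injective l →
    (∀ i, l i ∈ 𝔏) → (∀ i, x ∈ l i) → FormsJoint F l x

/-! Polynomial method. With `m = ⌊|K|^{1/n}⌋` we have `|K| < (m+1)^n`, so some nonzero polynomial
of degree at most `nm` vanishes on `K`. If every line of `𝔏` met `K` in more than `nm` points,
the polynomial would vanish identically on each line through a joint; since the directions there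
span, its gradient vanishes on `K`, and the partial derivatives, of smaller degree, are zero by
induction. In characteristic zero the polynomial is then constant, hence zero. In characteristic
`p` it has the form `q(x^p)` with `deg q < deg`, and `q` vanishes on the image of `K` under the
Frobenius map, which is again a set of joints of rich lines. -/

open MvPolynomial
open scoped Matrix

theorem Polynomial.eq_zero_of_natDegree_lt_encard {R : Type*} [CommRing R] [IsDomain R]
    {p : Polynomial R} {S : Set R} (hS : ∀ t ∈ S, p.eval t = 0)
    (hdeg : (p.natDegree : ℕ∞) < S.encard) : p = 0 := by
  classical
  by_contra hp
  have hsub : S ⊆ ↑p.roots.toFinset := fun t ht => by simpa [hp] using hS t ht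
  have hroots : p.roots.toFinset.card ≤ p.natDegree :=
    (Multiset.toFinset_card_le p.roots).trans p.card_roots'
  have := (Set.encard_le_encard hsub).trans_eq (Set.encard_coe_eq_coe_finsetCard _)
  exact hdeg.not_ge (this.trans (by exact_mod_cast hroots))

namespace MvPolynomial

variable {R : Type*} [CommRing R] {F : Type*} [Field F] {σ : Type*}

noncomputable def restrictLine (x b : σ → F) : MvPolynomial σ F →ₐ[F] Polynomial F :=
  aeval fun j => Polynomial.C (x j) + Polynomial.C (b j) * Polynomial.X

@[simp]
theorem restrictLine_X (x b : σ → F) (i : σ) :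
    restrictLine x b (X i) = Polynomial.C (x i) + Polynomial.C (b i) * Polynomial.X :=
  aeval_X _ _

@[simp]
theorem restrictLine_C (x b : σ → F) (a : F) : restrictLine x b (C a) = Polynomial.C a :=
  aeval_C _ _

theorem eval_restrictLine (x b : σ → F) (p : MvPolynomial σ F) (t : F) :
    (restrictLine x b p).eval t = eval (x + t • b) p := by
  induction p using MvPolynomial.induction_on with
  | C a => simp
  | add p q hp hq => simp [hp, hq]
  | mul_X p i hp => simp [hp, mul_comm t]

theorem natDegree_restrictLine_le (x b : σ → F) (p : MvPolynomial σ F) :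
    (restrictLine x b p).natDegree ≤ p.totalDegree := by
  conv_lhs => rw [p.as_sum]
  rw [map_sum]
  refine Polynomial.natDegree_sum_le_of_forall_le _ _ fun α hα => ?_
  rw [restrictLine, aeval_monomial, ← Polynomial.C_eq_algebraMap]
  refine (Polynomial.natDegree_C_mul_le _ _).trans <| (Polynomial.natDegree_prod_le _ _).trans ?_
  refine le_trans
    (Finset.sum_le_sum fun j _ => Polynomial.natDegree_pow_le_of_le (m := 1) (α j) ?_)
    ((Finsupp.sum_le_sum ?_).trans (le_totalDegree hα))
  · compute_degree
  · simp

theorem derivative_restrictLine [DecidableEq σ] [Fintype σ] (x b : σ → F) (p : MvPolynomial σ F) :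
    Polynomial.derivative (restrictLine x b p) =
      ∑ j, Polynomial.C (b j) * restrictLine x b (pderiv j p) := by
  induction p using MvPolynomial.induction_on with
  | C a => simp
  | add p q hp hq => simp [hp, hq, mul_add, Finset.sum_add_distrib]
  | mul_X p i hp =>
    have hterm : ∀ j, Polynomial.C (b j) * restrictLine x b (pderiv j (p * X i)) =
        Polynomial.C (b j) * restrictLine x b (pderiv j p) *
          (Polynomial.C (x i) + Polynomial.C (b i) * Polynomial.X) +
        if i = j then Polynomial.C (b i) * restrictLine x b p else 0 := fun j => by
      by_cases h : i = j
      · subst h; simp; ring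
      · simp [h]; ring
    rw [Finset.sum_congr rfl fun j _ => hterm j, Finset.sum_add_distrib, ← Finset.sum_mul,
      Finset.sum_ite_eq, map_mul, Polynomial.derivative_mul, hp]
    simp only [restrictLine_X, map_add, Polynomial.derivative_C, Polynomial.derivative_mul,
      Polynomial.derivative_X, Finset.mem_univ, if_true]
    ring

theorem totalDegree_pderiv_le (i : σ) (p : MvPolynomial σ R) :
    (pderiv i p).totalDegree ≤ p.totalDegree - 1 := by
  refine Finset.sup_le fun m hm => ?_
  have hm' : m + Finsupp.single i 1 ∈ p.support := by
    rw [mem_support_iff, coeff_pderiv] at hm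
    exact mem_support_iff.2 (left_ne_zero_of_mul hm)
  have := le_totalDegree hm'
  rw [Finsupp.sum_add_index' (fun _ => rfl) (fun _ _ _ => rfl), Finsupp.sum_single_index rfl]
    at this
  omega

theorem natCast_apply_eq_zero_of_pderiv_eq_zero [NoZeroDivisors R] {i : σ}
    {p : MvPolynomial σ R} (h : pderiv i p = 0) {α : σ →₀ ℕ} (hα : α ∈ p.support) :
    (α i : R) = 0 := by
  obtain hαi | hαi := eq_or_ne (α i) 0
  · simp [hαi]
  have hα' : α - Finsupp.single i 1 + Finsupp.single i 1 = α := by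
    ext j
    by_cases hj : i = j
    · subst hj; simp; omega
    · simp [hj]
  have := congrArg (coeff (α - Finsupp.single i 1)) h
  rw [coeff_pderiv, hα', coeff_zero] at this
  obtain ⟨k, hk⟩ := Nat.exists_eq_add_one_of_ne_zero hαi
  simp only [Finsupp.coe_tsub, Pi.sub_apply, Finsupp.single_eq_same, hk] at this ⊢
  push_cast at this ⊢
  exact (mul_eq_zero.1 this).resolve_left (mem_support_iff.1 hα)

theorem exists_expand_eq_of_forall_pderiv_eq_zero [NoZeroDivisors R] (e : ℕ) [CharP R e]
    {p : MvPolynomial σ R} (h : ∀ i, pderiv i p = 0) : ∃ q, expand e q = p := by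
  refine ⟨∑ α ∈ p.support, monomial (α.mapRange (· / e) (Nat.zero_div e)) (coeff α p), ?_⟩
  conv_rhs => rw [p.as_sum]
  refine (map_sum _ _ _).trans (Finset.sum_congr rfl fun α hα => ?_)
  rw [expand_monomial]
  congr 2
  ext j
  exact Nat.mul_div_cancel' <| (CharP.cast_eq_zero_iff R e _).1 <|
    natCast_apply_eq_zero_of_pderiv_eq_zero (h j) hα

variable [Fintype σ]

theorem exists_ne_zero_totalDegree_le_of_card_lt (m : ℕ) (K : Finset (σ → F))
    (hK : K.card < (m + 1) ^ Fintype.card σ) :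
    ∃ p : MvPolynomial σ F, p ≠ 0 ∧ p.totalDegree ≤ Fintype.card σ * m ∧
      ∀ x ∈ K, eval x p = 0 := by
  classical
  let e : (σ → Fin (m + 1)) → σ →₀ ℕ := fun f => Finsupp.equivFunOnFinite.symm (Fin.val ∘ f)
  have he : e.Injective :=
    Finsupp.equivFunOnFinite.symm.injective.comp Fin.val_injective.comp_left
  have hdep : ¬LinearIndependent F fun f (x : K) => eval (x : σ → F) (monomial (e f) (1 : F)) :=
    fun h => by
      have := h.fintype_card_le_finrank
      simp [Module.finrank_fintype_fun_eq_card] at this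
      omega
  obtain ⟨g, hg, f₀, hf₀⟩ := Fintype.not_linearIndependent_iff.1 hdep
  refine ⟨∑ f, g f • monomial (e f) 1, ?_, ?_, ?_⟩
  · intro h0
    refine hf₀ ?_
    have := (basisMonomials σ F).linearIndependent.comp e he
    rw [coe_basisMonomials] at this
    exact Fintype.linearIndependent_iff.1 this g h0 f₀
  · refine (totalDegree_finsetSum _ _).trans (Finset.sup_le fun f _ => ?_)
    refine (totalDegree_smul_le _ _).trans ((totalDegree_monomial_le _ _).trans ?_)
    rw [Finsupp.sum_fintype _ _ fun _ => rfl]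
    refine (Finset.sum_le_card_nsmul _ _ m fun i _ => Nat.lt_succ_iff.1 (f i).2).trans_eq ?_
    rw [Finset.card_univ, smul_eq_mul]
  · intro x hx
    simpa [map_sum] using congrFun hg ⟨x, hx⟩

end MvPolynomial

theorem Matrix.det_ne_zero_of_span_range_eq_top {F ι : Type*} [Field F] [Fintype ι]
    [DecidableEq ι] {b : Matrix ι ι F} (hb : Submodule.span F (Set.range b) = ⊤) : b.det ≠ 0 := by
  have := linearIndependent_of_top_le_span_of_card_eq_finrank hb.ge (by simp)
  exact (isUnit_iff_isUnit_det b).1 (linearIndependent_rows_iff_isUnit.1 this) |>.ne_zero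

section RichJointSet

variable {F : Type*} [Field F] {σ : Type*} [Fintype σ] [DecidableEq σ]

/-- `K` consists of joints of lines each meeting `K` in more than `d` points; the line through `x`
in direction `b i` is parametrised as `t ↦ x + t • b i`. -/
def IsRichJointSet (d : ℕ) (K : Set (σ → F)) : Prop :=
  ∀ x ∈ K, ∃ b : Matrix σ σ F, b.det ≠ 0 ∧ ∀ i, (d : ℕ∞) < {t : F | x + t • b i ∈ K}.encard

theorem IsRichJointSet.eval_pderiv_eq_zero {d : ℕ} {K : Set (σ → F)} (hK : IsRichJointSet d K)
    {p : MvPolynomial σ F} (hdeg : p.totalDegree ≤ d) (hp : ∀ x ∈ K, eval x p = 0)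
    {x : σ → F} (hx : x ∈ K) (j : σ) : eval x (pderiv j p) = 0 := by
  obtain ⟨b, hb, hlines⟩ := hK x hx
  have hrestrict : ∀ i, restrictLine x (b i) p = 0 := fun i =>
    Polynomial.eq_zero_of_natDegree_lt_encard (fun t ht => by rw [eval_restrictLine]; exact hp _ ht)
      (lt_of_le_of_lt (by exact_mod_cast (natDegree_restrictLine_le _ _ p).trans hdeg) (hlines i))
  have hgrad : b *ᵥ (fun j => eval x (pderiv j p)) = 0 := by
    ext i
    have := congrArg (fun q => (Polynomial.derivative q).eval 0) (hrestrict i)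
    simpa [derivative_restrictLine, Polynomial.eval_finsetSum, eval_restrictLine, Matrix.mulVec,
      dotProduct] using this
  exact congrFun (Matrix.eq_zero_of_mulVec_eq_zero hb hgrad) j

theorem IsRichJointSet.image_pow (e : ℕ) [ExpChar F e] {d : ℕ} {K : Set (σ → F)}
    (hK : IsRichJointSet d K) : IsRichJointSet d ((· ^ e) '' K) := by
  rintro _ ⟨x, hx, rfl⟩
  obtain ⟨b, hb, hlines⟩ := hK x hx
  refine ⟨b.map (· ^ e), ?_, fun i => (hlines i).trans_le ?_⟩
  · have : b.map (· ^ e) = (frobenius F e).mapMatrix b := rfl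
    rw [this, ← RingHom.map_det]
    exact pow_ne_zero _ hb
  · rw [← (frobenius_inj F e).encard_image]
    refine Set.encard_le_encard ?_
    rintro _ ⟨t, ht, rfl⟩
    exact ⟨x + t • b i, ht, by ext j; simp [frobenius_def, add_pow_expChar, mul_pow]⟩

theorem IsRichJointSet.eq_zero_of_eval_eq_zero {d : ℕ} {K : Set (σ → F)}
    (hK : IsRichJointSet d K) (hne : K.Nonempty) {p : MvPolynomial σ F}
    (hdeg : p.totalDegree ≤ d) (hp : ∀ x ∈ K, eval x p = 0) : p = 0 := by
  induction h : p.totalDegree using Nat.strong_induction_on generalizing p K with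
  | _ D IH =>
  obtain rfl | hD := eq_or_ne D 0
  · rw [totalDegree_eq_zero_iff_eq_C] at h
    obtain ⟨x₀, hx₀⟩ := hne
    rw [h] at hp ⊢
    simpa using hp x₀ hx₀
  have hpderiv : ∀ i, pderiv i p = 0 := fun i => by
    have := totalDegree_pderiv_le i p
    exact IH _ (by omega) hK hne (by omega) (fun x hx => hK.eval_pderiv_eq_zero hdeg hp hx i) rfl
  obtain ⟨q, rfl⟩ := exists_expand_eq_of_forall_pderiv_eq_zero (ringChar F) hpderiv
  rw [totalDegree_expand] at h hdeg
  -- in characteristic zero, `expand 0 q` is a constant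
  have hchar : (ringChar F).Prime := by
    refine (CharP.char_is_prime_or_zero F _).resolve_right fun h0 => ?_
    simp [h0] at h
    exact hD h.symm
  have : ExpChar F (ringChar F) := ExpChar.prime hchar
  have hq : q = 0 := by
    refine IH q.totalDegree ?_ (hK.image_pow (ringChar F)) (hne.image _) ?_ ?_ rfl
    · have := hchar.two_le
      have : 0 < D := Nat.pos_of_ne_zero hD
      nlinarith
    · nlinarith [hchar.two_le]
    · rintro _ ⟨x, hx, rfl⟩
      rw [← eval_expand]
      exact hp x hx
  simp [hq]

end RichJointSet

section Lines

variable {F : Type*} [Field F] {n : ℕ}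

theorem IsDirection.eq_range_of_mem {b : Fin n → F} {l : Set (Fin n → F)} (hb : IsDirection F b l)
    {x : Fin n → F} (hx : x ∈ l) : l = Set.range fun t : F => x + t • b := by
  obtain ⟨-, v, rfl⟩ := hb
  obtain ⟨s, rfl⟩ := hx
  ext y
  constructor
  · rintro ⟨t, rfl⟩
    exact ⟨t - s, by simp only [sub_smul]; abel⟩
  · rintro ⟨t, rfl⟩
    exact ⟨s + t, by simp only [add_smul]; abel⟩

theorem IsDirection.smul {b : Fin n → F} {l : Set (Fin n → F)} (hb : IsDirection F b l) {c : F}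
    (hc : c ≠ 0) : IsDirection F (c • b) l := by
  obtain ⟨hb0, v, rfl⟩ := hb
  refine ⟨smul_ne_zero hc hb0, v, Set.ext fun y => ⟨?_, ?_⟩⟩
  · rintro ⟨t, rfl⟩
    exact ⟨t / c, by rw [smul_smul, div_mul_cancel₀ t hc]⟩
  · rintro ⟨t, rfl⟩
    exact ⟨t * c, by rw [smul_smul]⟩

theorem IsLine.eq_range_of_mem {l : Set (Fin n → F)} (hl : IsLine F l) {x y : Fin n → F}
    (hx : x ∈ l) (hy : y ∈ l) (hxy : x ≠ y) : l = Set.range fun t : F => x + t • (y - x) := by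
  obtain ⟨v, b, hb, rfl⟩ := hl
  have hdir : IsDirection F b {x | ∃ t : F, x = v + t • b} := ⟨hb, v, rfl⟩
  rw [hdir.eq_range_of_mem hx] at hy
  obtain ⟨s, rfl⟩ := hy
  have hs : s ≠ 0 := by rintro rfl; simp at hxy
  simpa using (hdir.smul hs).eq_range_of_mem hx

theorem IsLine.inter_subsingleton {l l' : Set (Fin n → F)} (hl : IsLine F l) (hl' : IsLine F l')
    (hne : l ≠ l') : (l ∩ l').Subsingleton := fun x hx y hy => by
  by_contra hxy
  exact hne <| (hl.eq_range_of_mem hx.1 hy.1 hxy).trans (hl'.eq_range_of_mem hx.2 hy.2 hxy).symm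

theorem finite_setOf_isJoint (hn : 2 ≤ n) {𝔏 : Finset (Set (Fin n → F))}
    (h𝔏 : ∀ l ∈ 𝔏, IsLine F l) : {x | IsJoint F (𝔏 : Set (Set (Fin n → F))) x}.Finite := by
  classical
  refine ((𝔏.offDiag.finite_toSet).biUnion (t := fun p => p.1 ∩ p.2) fun p hp => ?_).subset ?_
  · obtain ⟨h1, h2, hne⟩ := Finset.mem_offDiag.1 hp
    exact ((h𝔏 _ h1).inter_subsingleton (h𝔏 _ h2) hne).finite
  · rintro x ⟨l, hinj, hl𝔏, hxl, -⟩
    have h01 : (⟨0, by omega⟩ : Fin n) ≠ ⟨1, by omega⟩ := by simp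
    exact Set.mem_biUnion (x := (l ⟨0, by omega⟩, l ⟨1, by omega⟩))
      (Finset.mem_offDiag.2 ⟨hl𝔏 _, hl𝔏 _, hinj.ne h01⟩) ⟨hxl _, hxl _⟩

theorem IsDirection.encard_setOf_add_smul_mem {b : Fin n → F} {l : Set (Fin n → F)}
    (hb : IsDirection F b l) {x : Fin n → F} (hx : x ∈ l) (K : Set (Fin n → F)) :
    {t : F | x + t • b ∈ K}.encard = (l ∩ K).encard := by
  have hinj : Function.Injective fun t : F => x + t • b := fun s t h =>
    smul_left_injective F hb.1 (add_left_cancel h)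
  rw [hb.eq_range_of_mem hx, ← Set.image_preimage_eq_range_inter, hinj.encard_image]
  rfl

theorem exists_mem_ncard_inter_le (hn : 2 ≤ n) {𝔏 : Finset (Set (Fin n → F))}
    {K : Set (Fin n → F)} (h𝔏 : ∀ l ∈ 𝔏, IsLine F l) (hK : ∀ x ∈ K, IsJoint F ↑𝔏 x)
    (hne : K.Nonempty) {m : ℕ} (hm : K.ncard < (m + 1) ^ n) :
    ∃ l ∈ 𝔏, (l ∩ K).ncard ≤ n * m := by
  have hKfin : K.Finite := (finite_setOf_isJoint hn h𝔏).subset hK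
  by_contra! hrich
  obtain ⟨p, hp0, hdeg, hp⟩ := exists_ne_zero_totalDegree_le_of_card_lt m hKfin.toFinset
    (by simpa [← Set.ncard_eq_toFinset_card _ hKfin] using hm)
  refine hp0 (IsRichJointSet.eq_zero_of_eval_eq_zero (d := n * m) ?_ hne (hdeg.trans_eq (by simp))
    fun x hx => hp x (by simpa using hx))
  intro x hx
  obtain ⟨l, -, hl𝔏, hxl, b, hb, hspan⟩ := hK x hx
  refine ⟨b, Matrix.det_ne_zero_of_span_range_eq_top hspan, fun i => ?_⟩
  rw [(hb i).encard_setOf_add_smul_mem (hxl i), ← (hKfin.inter_of_right _).cast_ncard_eq]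
  exact_mod_cast hrich _ (hl𝔏 i)

end Lines

theorem lt_floor_rpow_one_div_add_one_pow (N : ℕ) {n : ℕ} (hn : n ≠ 0) :
    N < (⌊(N : ℝ) ^ (1 / (n : ℝ))⌋₊ + 1) ^ n := by
  have hr : 0 ≤ (N : ℝ) ^ (1 / (n : ℝ)) := by positivity
  have : (N : ℝ) < ((⌊(N : ℝ) ^ (1 / (n : ℝ))⌋₊ : ℝ) + 1) ^ n := by
    calc (N : ℝ) = ((N : ℝ) ^ (1 / (n : ℝ))) ^ n := by
          rw [one_div, Real.rpow_inv_natCast_pow N.cast_nonneg hn]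
      _ < _ := pow_lt_pow_left₀ (Nat.lt_floor_add_one _) hr hn
  exact_mod_cast this

/-- For `n ≥ 3` there is a constant `C` depending only on `n` such that for any field
`F`, any finite collection `𝔏` of lines in `F^n` and any nonempty subset `K` of the
joints of `𝔏`, some line `l ∈ 𝔏` satisfies `|l ∩ K| ≤ C·|K|^{1/n}`. -/
theorem stmt9 (n : ℕ) (hn : 3 ≤ n) :
    ∃ C : ℝ, ∀ (F : Type) [Field F] (𝔏 : Finset (Set (Fin n → F))) (K : Set (Fin n → F)),
      (∀ l ∈ 𝔏, IsLine F l) → (∀ x ∈ K, IsJoint F ↑𝔏 x) → K.Nonempty →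
      ∃ l ∈ 𝔏, ((l ∩ K).ncard : ℝ) ≤ C * (K.ncard : ℝ) ^ (1 / (n : ℝ)) := by
  refine ⟨n, fun F _ 𝔏 K h𝔏 hK hne => ?_⟩
  obtain ⟨l, hl, hle⟩ := exists_mem_ncard_inter_le (by omega) h𝔏 hK hne
    (lt_floor_rpow_one_div_add_one_pow K.ncard (n := n) (by omega))
  refine ⟨l, hl, ?_⟩
  calc ((l ∩ K).ncard : ℝ) ≤ n * ⌊(K.ncard : ℝ) ^ (1 / (n : ℝ))⌋₊ := by exact_mod_cast hle
    _ ≤ n * (K.ncard : ℝ) ^ (1 / (n : ℝ)) := by gcongr; exact Nat.floor_le (by positivity)
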